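/- arXiv:2502.09917 — 6 statements merged into one kernel-verified Lean document; each statement's English description precedes it below -/
import Mathlib

section
/- Let h₁, h₂ ≥ 0 and r₁, r₂, p₁, p₂, q₁, q₂ > 0 be real numbers. Then the algebraic system h₁ − r₁ v₁ + p₁ (q₁ − v₁) v₂ = 0, h₂ − r₂ v₂ + p₂ (q₂ − v₂) v₁ = 0 has at most one solution (v₁, v₂) with v₁ > 0 and v₂ > 0. -/
/-- Uniqueness of positive solutions of the algebraic system arising in the
West Nile virus equilibrium problem. -/
theorem stmt_1 (h₁ h₂ r₁ r₂ p₁ p₂ q₁ q₂ : ℝ)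
    (hh₁ : 0 ≤ h₁) (hh₂ : 0 ≤ h₂) (hr₁ : 0 < r₁) (hr₂ : 0 < r₂)
    (hp₁ : 0 < p₁) (hp₂ : 0 < p₂) (hq₁ : 0 < q₁) (hq₂ : 0 < q₂)
    (v₁ v₂ w₁ w₂ : ℝ) (hv₁ : 0 < v₁) (hv₂ : 0 < v₂) (hw₁ : 0 < w₁) (hw₂ : 0 < w₂)
    (hv : h₁ - r₁ * v₁ + p₁ * (q₁ - v₁) * v₂ = 0 ∧
          h₂ - r₂ * v₂ + p₂ * (q₂ - v₂) * v₁ = 0)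
    (hw : h₁ - r₁ * w₁ + p₁ * (q₁ - w₁) * w₂ = 0 ∧
          h₂ - r₂ * w₂ + p₂ * (q₂ - w₂) * w₁ = 0) :
    v₁ = w₁ ∧ v₂ = w₂ := by
  obtain ⟨hv1, hv2⟩ := hv
  obtain ⟨hw1, hw2⟩ := hw
  set A : ℝ := p₂ * (r₁ + p₁ * q₂) with hA
  set B : ℝ := r₁ * r₂ + p₁ * h₂ - p₁ * p₂ * q₁ * q₂ - p₂ * h₁ with hB
  set C : ℝ := r₂ * h₁ + p₁ * q₁ * h₂ with hC
  have hApos : 0 < A := by positivity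
  have hCnn : 0 ≤ C := by positivity
  have e2v : v₂ * (r₂ + p₂ * v₁) = h₂ + p₂ * q₂ * v₁ := by linear_combination (-1 : ℝ) * hv2
  have e2w : w₂ * (r₂ + p₂ * w₁) = h₂ + p₂ * q₂ * w₁ := by linear_combination (-1 : ℝ) * hw2
  have qv : A * v₁ ^ 2 + B * v₁ - C = 0 := by
    linear_combination (-(r₂ + p₂ * v₁)) * hv1 + p₁ * (q₁ - v₁) * e2v
  have qw : A * w₁ ^ 2 + B * w₁ - C = 0 := by
    linear_combination (-(r₂ + p₂ * w₁)) * hw1 + p₁ * (q₁ - w₁) * e2w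
  have key : (v₁ - w₁) * (A * (v₁ + w₁) + B) = 0 := by linear_combination qv - qw
  have h1eq : v₁ = w₁ := by
    rcases mul_eq_zero.mp key with h | h
    · linarith
    · exfalso
      have : A * (v₁ * w₁) + C = 0 := by linear_combination v₁ * h - qv
      nlinarith [mul_pos hv₁ hw₁]
  refine ⟨h1eq, ?_⟩
  subst h1eq
  have hden : 0 < r₂ + p₂ * v₁ := by positivity
  have : v₂ * (r₂ + p₂ * v₁) = w₂ * (r₂ + p₂ * v₁) := by rw [e2v, e2w]
  exact mul_right_cancel₀ (ne_of_gt hden) this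
end

section
/- Suppose the operator ℬ, defined on [C(closure Ω)]^n by ℬ_i[φ](x) = d_i ∫_Ω J_i(x,y)φ_i(y)dy + Σ_k b_{ik}(x)φ_k(x) with cooperative continuous coefficient matrix B(x), admits a principal eigenvalue λ_p(ℬ) with a strongly positive continuous eigenfunction φ (φ_i(x) > 0 for all x, i). Then λ_p(ℬ) equals both the inf–sup and the sup–inf Collatz–Wielandt quantities: λ_p(ℬ) = inf_{φ ∈ X⁺⁺} sup_{x,i} ℬ_i[φ](x)/φ_i(x) = sup_{φ ∈ X⁺⁺} inf_{x,i} ℬ_i[φ](x)/φ_i(x), where X⁺⁺ is the set of n-tuples of continuous functions strictly positive on the closure of Ω. -/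
open MeasureTheory Set

section Aux

variable {N n : ℕ} {Ω : Set (Fin N → ℝ)}
  {J : Fin n → (Fin N → ℝ) → (Fin N → ℝ) → ℝ} {d : Fin n → ℝ}
  {b : (Fin N → ℝ) → Fin n → Fin n → ℝ}

lemma integ_aux (hΩb : Bornology.IsBounded Ω)
    (hJcont : ∀ i, Continuous fun q : (Fin N → ℝ) × (Fin N → ℝ) => J i q.1 q.2)
    (i : Fin n) (x : Fin N → ℝ) {w : (Fin N → ℝ) → ℝ}
    (hw : ContinuousOn w (closure Ω)) :
    IntegrableOn (fun y => J i x y * w y) Ω volume := by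
  have hK : IsCompact (closure Ω) := hΩb.isCompact_closure
  have hc : ContinuousOn (fun y => J i x y * w y) (closure Ω) := by
    have : Continuous fun y => J i x y :=
      (hJcont i).comp (continuous_const.prodMk continuous_id)
    exact this.continuousOn.mul hw
  exact (hc.integrableOn_compact hK).mono_set subset_closure

lemma touch_aux (hΩo : IsOpen Ω) (hΩb : Bornology.IsBounded Ω)
    (hJcont : ∀ i, Continuous fun q : (Fin N → ℝ) × (Fin N → ℝ) => J i q.1 q.2)
    (hJnn : ∀ i x y, 0 ≤ J i x y) (hd : ∀ i, 0 < d i)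
    (hbcoop : ∀ x ∈ closure Ω, ∀ i k, i ≠ k → 0 ≤ b x i k)
    (u v : Fin n → (Fin N → ℝ) → ℝ)
    (hu : ∀ i, ContinuousOn (u i) (closure Ω)) (hv : ∀ i, ContinuousOn (v i) (closure Ω))
    (hle : ∀ i, ∀ x ∈ closure Ω, u i x ≤ v i x)
    (x₀ : Fin N → ℝ) (hx₀ : x₀ ∈ closure Ω) (i₀ : Fin n) (heq : u i₀ x₀ = v i₀ x₀) :
    (d i₀ * ∫ y in Ω, J i₀ x₀ y * u i₀ y) + ∑ k, b x₀ i₀ k * u k x₀ ≤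
      (d i₀ * ∫ y in Ω, J i₀ x₀ y * v i₀ y) + ∑ k, b x₀ i₀ k * v k x₀ := by
  apply add_le_add
  · apply mul_le_mul_of_nonneg_left _ (hd i₀).le
    apply setIntegral_mono_on (integ_aux hΩb hJcont i₀ x₀ (hu i₀))
      (integ_aux hΩb hJcont i₀ x₀ (hv i₀)) hΩo.measurableSet
    intro y hy
    exact mul_le_mul_of_nonneg_left (hle i₀ y (subset_closure hy)) (hJnn i₀ x₀ y)
  · apply Finset.sum_le_sum
    intro k _
    rcases eq_or_ne i₀ k with rfl | hne
    · rw [heq]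
    · exact mul_le_mul_of_nonneg_left (hle k x₀ hx₀) (hbcoop x₀ hx₀ i₀ k hne)

end Aux

/-- The inf–sup Collatz–Wielandt quantity for the cooperative nonlocal operator
`ℬ_i[φ](x) = d_i ∫_Ω J_i(x,y)φ_i(y)dy + Σ_k b_{ik}(x)φ_k(x)`. -/
noncomputable def infSupCW {N n : ℕ} (Ω : Set (Fin N → ℝ))
    (J : Fin n → (Fin N → ℝ) → (Fin N → ℝ) → ℝ) (d : Fin n → ℝ)
    (b : (Fin N → ℝ) → Fin n → Fin n → ℝ) : ℝ :=
  ⨅ φ : {φ : Fin n → (Fin N → ℝ) → ℝ //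
      ∀ i, ContinuousOn (φ i) (closure Ω) ∧ ∀ x ∈ closure Ω, 0 < φ i x},
    ⨆ q : ↥(closure Ω) × Fin n,
      ((d q.2 * ∫ y in Ω, J q.2 (↑q.1) y * φ.1 q.2 y) +
        ∑ k, b (↑q.1) q.2 k * φ.1 k (↑q.1)) / φ.1 q.2 (↑q.1)

/-- The sup–inf Collatz–Wielandt quantity. -/
noncomputable def supInfCW {N n : ℕ} (Ω : Set (Fin N → ℝ))
    (J : Fin n → (Fin N → ℝ) → (Fin N → ℝ) → ℝ) (d : Fin n → ℝ)
    (b : (Fin N → ℝ) → Fin n → Fin n → ℝ) : ℝ :=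
  ⨆ φ : {φ : Fin n → (Fin N → ℝ) → ℝ //
      ∀ i, ContinuousOn (φ i) (closure Ω) ∧ ∀ x ∈ closure Ω, 0 < φ i x},
    ⨅ q : ↥(closure Ω) × Fin n,
      ((d q.2 * ∫ y in Ω, J q.2 (↑q.1) y * φ.1 q.2 y) +
        ∑ k, b (↑q.1) q.2 k * φ.1 k (↑q.1)) / φ.1 q.2 (↑q.1)

/-- A principal eigenvalue of the cooperative nonlocal operator ℬ (one with a strongly
positive continuous eigenfunction) equals both Collatz–Wielandt quantities. -/
theorem stmt_6 {N n : ℕ} (hn : 1 ≤ n) (Ω : Set (Fin N → ℝ)) (hΩo : IsOpen Ω)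
    (hΩb : Bornology.IsBounded Ω) (hΩne : Ω.Nonempty)
    (J : Fin n → (Fin N → ℝ) → (Fin N → ℝ) → ℝ)
    (hJcont : ∀ i, Continuous fun q : (Fin N → ℝ) × (Fin N → ℝ) => J i q.1 q.2)
    (hJnn : ∀ i x y, 0 ≤ J i x y) (hJdiag : ∀ i x, 0 < J i x x)
    (d : Fin n → ℝ) (hd : ∀ i, 0 < d i)
    (b : (Fin N → ℝ) → Fin n → Fin n → ℝ)
    (hbcont : ∀ i k, ContinuousOn (fun x => b x i k) (closure Ω))
    (hbcoop : ∀ x ∈ closure Ω, ∀ i k, i ≠ k → 0 ≤ b x i k)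
    (lam : ℝ) (φ : Fin n → (Fin N → ℝ) → ℝ)
    (hφ : ∀ i, ContinuousOn (φ i) (closure Ω) ∧ ∀ x ∈ closure Ω, 0 < φ i x)
    (heig : ∀ i, ∀ x ∈ closure Ω,
      (d i * ∫ y in Ω, J i x y * φ i y) + ∑ k, b x i k * φ k x = lam * φ i x) :
    lam = infSupCW Ω J d b ∧ lam = supInfCW Ω J d b := by
  classical
  have hK : IsCompact (closure Ω) := hΩb.isCompact_closure
  have hKne : (closure Ω).Nonempty := hΩne.closure
  haveI : Nonempty (Fin n) := ⟨⟨0, hn⟩⟩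
  haveI : Nonempty ↥(closure Ω) := hKne.to_subtype
  set X := {ψ : Fin n → (Fin N → ℝ) → ℝ //
      ∀ i, ContinuousOn (ψ i) (closure Ω) ∧ ∀ x ∈ closure Ω, 0 < ψ i x} with hXdef
  let F : X → (↥(closure Ω) × Fin n) → ℝ := fun ψ q =>
    ((d q.2 * ∫ y in Ω, J q.2 (↑q.1) y * ψ.1 q.2 y) +
      ∑ k, b (↑q.1) q.2 k * ψ.1 k (↑q.1)) / ψ.1 q.2 (↑q.1)
  have hIS : infSupCW Ω J d b = ⨅ ψ, ⨆ q, F ψ q := rfl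
  have hSI : supInfCW Ω J d b = ⨆ ψ, ⨅ q, F ψ q := rfl
  obtain ⟨xb, hxb⟩ := hΩne
  have hxbar : xb ∈ closure Ω := subset_closure hxb
  -- boundedness of F ψ
  have hbdd : ∀ ψ : X, ∃ R, ∀ q, |F ψ q| ≤ R := by
    rintro ⟨ψ, hψ⟩
    obtain ⟨M, hM⟩ : ∃ M, ∀ i, ∀ x ∈ closure Ω, |ψ i x| ≤ M := by
      choose c hc using fun i => hK.exists_bound_of_continuousOn (hψ i).1
      exact ⟨Finset.univ.sup' Finset.univ_nonempty c, fun i x hx =>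
        le_trans (hc i x hx) (Finset.le_sup' c (Finset.mem_univ i))⟩
    obtain ⟨CJ, hCJ⟩ : ∃ C, ∀ i, ∀ x ∈ closure Ω, ∀ y ∈ closure Ω, |J i x y| ≤ C := by
      choose c hc using fun i =>
        (hK.prod hK).exists_bound_of_continuousOn (hJcont i).continuousOn
      refine ⟨Finset.univ.sup' Finset.univ_nonempty c, fun i x hx y hy =>
        le_trans ?_ (Finset.le_sup' c (Finset.mem_univ i))⟩
      exact hc i (x, y) (Set.mk_mem_prod hx hy)
    obtain ⟨Cb, hCb⟩ : ∃ C, ∀ i k, ∀ x ∈ closure Ω, |b x i k| ≤ C := by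
      choose c hc using fun p : Fin n × Fin n =>
        hK.exists_bound_of_continuousOn (hbcont p.1 p.2)
      exact ⟨Finset.univ.sup' Finset.univ_nonempty c, fun i k x hx =>
        le_trans (hc (i, k) x hx) (Finset.le_sup' c (Finset.mem_univ (i, k)))⟩
    obtain ⟨δ, hδ0, hδ⟩ : ∃ δ, 0 < δ ∧ ∀ i, ∀ x ∈ closure Ω, δ ≤ ψ i x := by
      choose p hpK hpmin using fun i => hK.exists_isMinOn hKne (hψ i).1
      refine ⟨Finset.univ.inf' Finset.univ_nonempty fun i => ψ i (p i), ?_, ?_⟩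
      · exact (Finset.lt_inf'_iff _).mpr fun i _ => (hψ i).2 _ (hpK i)
      · exact fun i x hx =>
          le_trans (Finset.inf'_le _ (Finset.mem_univ i)) (hpmin i hx)
    have hM0 : 0 ≤ M := le_trans (abs_nonneg _) (hM ⟨0, hn⟩ xb hxbar)
    have hCJ0 : 0 ≤ CJ := le_trans (abs_nonneg _) (hCJ ⟨0, hn⟩ xb hxbar xb hxbar)
    have hCb0 : 0 ≤ Cb := le_trans (abs_nonneg _) (hCb ⟨0, hn⟩ ⟨0, hn⟩ xb hxbar)
    have hμ : volume Ω < ⊤ := lt_of_le_of_lt (measure_mono subset_closure) hK.measure_lt_top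
    set vol := (volume Ω).toReal with hvol
    have hvol0 : 0 ≤ vol := ENNReal.toReal_nonneg
    obtain ⟨D, hDle⟩ : ∃ D, ∀ i, |d i| ≤ D :=
      ⟨Finset.univ.sup' Finset.univ_nonempty fun j => |d j|,
        fun i => Finset.le_sup' (fun j => |d j|) (Finset.mem_univ i)⟩
    have hD0 : 0 ≤ D := le_trans (abs_nonneg _) (hDle ⟨0, hn⟩)
    have hI : ∀ (i : Fin n) (x : Fin N → ℝ), x ∈ closure Ω →
        |∫ y in Ω, J i x y * ψ i y| ≤ CJ * M * vol := by
      intro i x hx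
      rw [← Real.norm_eq_abs]
      apply norm_setIntegral_le_of_norm_le_const hμ
      · intro y hy
        rw [Real.norm_eq_abs, abs_mul]
        exact mul_le_mul (hCJ i x hx y (subset_closure hy))
          (hM i y (subset_closure hy)) (abs_nonneg _) hCJ0
    refine ⟨(D * (CJ * M * vol) + n * (Cb * M)) / δ, ?_⟩
    rintro ⟨⟨x, hx⟩, i⟩
    have hnum : |(d i * ∫ y in Ω, J i x y * ψ i y) + ∑ k, b x i k * ψ k x| ≤
        D * (CJ * M * vol) + n * (Cb * M) := by
      refine le_trans (abs_add_le _ _) (add_le_add ?_ ?_)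
      · rw [abs_mul]
        exact mul_le_mul (hDle i) (hI i x hx) (abs_nonneg _) hD0
      · refine le_trans (Finset.abs_sum_le_sum_abs _ _) ?_
        have : ∀ k ∈ Finset.univ, |b x i k * ψ k x| ≤ Cb * M := by
          intro k _
          rw [abs_mul]
          exact mul_le_mul (hCb i k x hx) (hM k x hx) (abs_nonneg _) hCb0
        calc ∑ k, |b x i k * ψ k x| ≤ ∑ _k : Fin n, Cb * M := Finset.sum_le_sum this
          _ = n * (Cb * M) := by
            rw [Finset.sum_const, Finset.card_univ, Fintype.card_fin, nsmul_eq_mul]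
    have hψpos : 0 < ψ i x := (hψ i).2 x hx
    have : |F ⟨ψ, hψ⟩ (⟨x, hx⟩, i)| =
        |(d i * ∫ y in Ω, J i x y * ψ i y) + ∑ k, b x i k * ψ k x| / ψ i x := by
      simp only [F, abs_div, abs_of_pos hψpos]
    rw [this]
    exact div_le_div₀ (add_nonneg (mul_nonneg hD0 (mul_nonneg (mul_nonneg hCJ0 hM0) hvol0))
      (mul_nonneg (Nat.cast_nonneg n) (mul_nonneg hCb0 hM0))) hnum hδ0 (hδ i x hx)
  have hbddA : ∀ ψ : X, BddAbove (Set.range (F ψ)) := by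
    intro ψ
    obtain ⟨R, hR⟩ := hbdd ψ
    exact ⟨R, by rintro _ ⟨q, rfl⟩; exact le_trans (le_abs_self _) (hR q)⟩
  have hbddB : ∀ ψ : X, BddBelow (Set.range (F ψ)) := by
    intro ψ
    obtain ⟨R, hR⟩ := hbdd ψ
    exact ⟨-R, by rintro _ ⟨q, rfl⟩; exact neg_le_of_abs_le (hR q)⟩
  -- the eigenfunction gives constant quotient
  have hQφ : ∀ q, F ⟨φ, hφ⟩ q = lam := by
    rintro ⟨⟨x, hx⟩, i⟩
    have hpos : φ i x ≠ 0 := ((hφ i).2 x hx).ne'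
    simp only [F]
    rw [heig i x hx, mul_div_assoc, div_self hpos, mul_one]
  -- linearity of the numerator under scalar multiplication of the eigenfunction
  have hlin : ∀ (t : ℝ) (i : Fin n) (x : Fin N → ℝ), x ∈ closure Ω →
      (d i * ∫ y in Ω, J i x y * (t * φ i y)) + ∑ k, b x i k * (t * φ k x) =
        lam * (t * φ i x) := by
    intro t i x hx
    have h1 : (fun y => J i x y * (t * φ i y)) = fun y => t * (J i x y * φ i y) := by
      funext y; ring
    have h2 : ∑ k, b x i k * (t * φ k x) = t * ∑ k, b x i k * φ k x := by
      rw [Finset.mul_sum]; exact Finset.sum_congr rfl fun k _ => by ring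
    rw [h1, integral_const_mul, h2]
    have h3 := heig i x hx
    calc d i * (t * ∫ y in Ω, J i x y * φ i y) + t * ∑ k, b x i k * φ k x
        = t * ((d i * ∫ y in Ω, J i x y * φ i y) + ∑ k, b x i k * φ k x) := by ring
      _ = t * (lam * φ i x) := by rw [h3]
      _ = lam * (t * φ i x) := by ring
  have htφcont : ∀ t : ℝ, ∀ i, ContinuousOn (fun x => t * φ i x) (closure Ω) :=
    fun t i => continuousOn_const.mul (hφ i).1
  -- key lower bound : for every ψ there is a point with quotient ≥ lam
  have hge : ∀ ψ : X, ∃ q, lam ≤ F ψ q := by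
    rintro ⟨ψ, hψ⟩
    have hcont : ∀ i, ContinuousOn (fun x => ψ i x / φ i x) (closure Ω) :=
      fun i => (hψ i).1.div (hφ i).1 fun x hx => ((hφ i).2 x hx).ne'
    choose p hpK hpmin using fun i => hK.exists_isMinOn hKne (hcont i)
    obtain ⟨i₀, -, hi₀⟩ := Finset.exists_min_image Finset.univ
      (fun i => ψ i (p i) / φ i (p i)) ⟨⟨0, hn⟩, Finset.mem_univ _⟩
    set t := ψ i₀ (p i₀) / φ i₀ (p i₀) with ht
    set x₀ := p i₀ with hx₀def
    have hx₀ : x₀ ∈ closure Ω := hpK i₀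
    have hle' : ∀ i, ∀ x ∈ closure Ω, t * φ i x ≤ ψ i x := by
      intro i x hx
      have h1 : t ≤ ψ i x / φ i x :=
        le_trans (hi₀ i (Finset.mem_univ i)) (hpmin i hx)
      exact (le_div_iff₀ ((hφ i).2 x hx)).mp h1
    have heq' : t * φ i₀ x₀ = ψ i₀ x₀ := div_mul_cancel₀ _ ((hφ i₀).2 x₀ hx₀).ne'
    have key := touch_aux hΩo hΩb hJcont hJnn hd hbcoop (fun i x => t * φ i x) ψ
      (htφcont t) (fun i => (hψ i).1) hle' x₀ hx₀ i₀ heq'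
    refine ⟨(⟨x₀, hx₀⟩, i₀), ?_⟩
    have hψpos : 0 < ψ i₀ x₀ := (hψ i₀).2 x₀ hx₀
    show lam ≤ ((d i₀ * ∫ y in Ω, J i₀ x₀ y * ψ i₀ y) + ∑ k, b x₀ i₀ k * ψ k x₀) / ψ i₀ x₀
    rw [le_div_iff₀ hψpos]
    calc lam * ψ i₀ x₀ = lam * (t * φ i₀ x₀) := by rw [heq']
      _ = (d i₀ * ∫ y in Ω, J i₀ x₀ y * (t * φ i₀ y)) + ∑ k, b x₀ i₀ k * (t * φ k x₀) :=
        (hlin t i₀ x₀ hx₀).symm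
      _ ≤ _ := key
  -- key upper bound : for every ψ there is a point with quotient ≤ lam
  have hleq : ∀ ψ : X, ∃ q, F ψ q ≤ lam := by
    rintro ⟨ψ, hψ⟩
    have hcont : ∀ i, ContinuousOn (fun x => ψ i x / φ i x) (closure Ω) :=
      fun i => (hψ i).1.div (hφ i).1 fun x hx => ((hφ i).2 x hx).ne'
    choose p hpK hpmax using fun i => hK.exists_isMaxOn hKne (hcont i)
    obtain ⟨i₀, -, hi₀⟩ := Finset.exists_max_image Finset.univ
      (fun i => ψ i (p i) / φ i (p i)) ⟨⟨0, hn⟩, Finset.mem_univ _⟩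
    set t := ψ i₀ (p i₀) / φ i₀ (p i₀) with ht
    set x₀ := p i₀ with hx₀def
    have hx₀ : x₀ ∈ closure Ω := hpK i₀
    have hle' : ∀ i, ∀ x ∈ closure Ω, ψ i x ≤ t * φ i x := by
      intro i x hx
      have h1 : ψ i x / φ i x ≤ t :=
        le_trans (hpmax i hx) (hi₀ i (Finset.mem_univ i))
      exact (div_le_iff₀ ((hφ i).2 x hx)).mp h1
    have heq' : ψ i₀ x₀ = t * φ i₀ x₀ := (div_mul_cancel₀ _ ((hφ i₀).2 x₀ hx₀).ne').symm
    have key := touch_aux hΩo hΩb hJcont hJnn hd hbcoop ψ (fun i x => t * φ i x)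
      (fun i => (hψ i).1) (htφcont t) hle' x₀ hx₀ i₀ heq'
    refine ⟨(⟨x₀, hx₀⟩, i₀), ?_⟩
    have hψpos : 0 < ψ i₀ x₀ := (hψ i₀).2 x₀ hx₀
    show ((d i₀ * ∫ y in Ω, J i₀ x₀ y * ψ i₀ y) + ∑ k, b x₀ i₀ k * ψ k x₀) / ψ i₀ x₀ ≤ lam
    rw [div_le_iff₀ hψpos]
    calc (d i₀ * ∫ y in Ω, J i₀ x₀ y * ψ i₀ y) + ∑ k, b x₀ i₀ k * ψ k x₀
        ≤ (d i₀ * ∫ y in Ω, J i₀ x₀ y * (t * φ i₀ y)) + ∑ k, b x₀ i₀ k * (t * φ k x₀) := key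
      _ = lam * (t * φ i₀ x₀) := hlin t i₀ x₀ hx₀
      _ = lam * ψ i₀ x₀ := by rw [heq']
  -- assemble
  have hSle : ∀ ψ : X, lam ≤ ⨆ q, F ψ q := by
    intro ψ
    obtain ⟨q₀, hq₀⟩ := hge ψ
    exact le_ciSup_of_le (hbddA ψ) q₀ hq₀
  have hIge : ∀ ψ : X, ⨅ q, F ψ q ≤ lam := by
    intro ψ
    obtain ⟨q₀, hq₀⟩ := hleq ψ
    exact ciInf_le_of_le (hbddB ψ) q₀ hq₀
  have hSφ : (⨆ q, F ⟨φ, hφ⟩ q) = lam := (iSup_congr hQφ).trans ciSup_const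
  have hIφ : (⨅ q, F ⟨φ, hφ⟩ q) = lam := (iInf_congr hQφ).trans ciInf_const
  haveI : Nonempty X := ⟨⟨φ, hφ⟩⟩
  constructor
  · rw [hIS]
    refine le_antisymm (le_ciInf hSle) ?_
    exact ciInf_le_of_le ⟨lam, by rintro _ ⟨ψ, rfl⟩; exact hSle ψ⟩ ⟨φ, hφ⟩ hSφ.le
  · rw [hSI]
    refine le_antisymm ?_ (ciSup_le hIge)
    exact le_ciSup_of_le ⟨lam, by rintro _ ⟨ψ, rfl⟩; exact hIge ψ⟩ ⟨φ, hφ⟩ hIφ.ge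
end

section
/- Under assumptions (H1)–(H2), let U ∈ [L^∞(Ω)]^n be a positive solution of the nonlocal equilibrium system. Fix x₀ in the closure of Ω and suppose the algebraic system d_i ∫_Ω J_i(x₀,y)U_i(y)dy − d*_i(x₀)v_i + f_i(x₀, v) = 0 (i = 1,…,n) has at most one positive solution v ∈ ℝ^n. Then U is continuous at x₀. -/
open MeasureTheory Set Filter Topology Bornology
open scoped ENNReal

/-- Continuity of a parameterized integral over a bounded open set. -/
lemma contIntAux {N : ℕ} (Ω : Set (Fin N → ℝ)) (hΩm : MeasurableSet Ω)
    (hΩb : IsBounded Ω) (F : (Fin N → ℝ) × (Fin N → ℝ) → ℝ) (hF : Continuous F)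
    (w : (Fin N → ℝ) → ℝ) (hw : Measurable w) (C : ℝ)
    (hwb : ∀ y ∈ Ω, |w y| ≤ C) :
    Continuous fun x => ∫ y in Ω, F (x, y) * w y := by
  have hμΩ : volume Ω < ⊤ := hΩb.measure_lt_top
  rw [continuous_iff_continuousAt]
  intro x₀
  obtain ⟨M, hM⟩ := ((isCompact_closedBall x₀ 1).prod hΩb.isCompact_closure).exists_bound_of_continuousOn hF.continuousOn
  set M' := max M 0 with hM'
  set C' := max C 0 with hC'
  apply continuousAt_of_dominated (bound := fun _ => M' * C')
  · filter_upwards with x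
    exact ((hF.comp (continuous_const.prodMk continuous_id)).measurable.mul hw).aestronglyMeasurable
  · filter_upwards [eventually_mem_nhds_iff.mpr (Metric.closedBall_mem_nhds x₀ one_pos)] with x hx
    · rw [ae_restrict_iff' hΩm]
      filter_upwards with y hy
      have h1 : |F (x, y)| ≤ M' :=
        le_trans (hM (x, y) ⟨mem_of_mem_nhds hx, subset_closure hy⟩) (le_max_left _ _)
      have h2 : |w y| ≤ C' := le_trans (hwb y hy) (le_max_left _ _)
      calc ‖F (x, y) * w y‖ = |F (x, y)| * |w y| := abs_mul _ _
        _ ≤ M' * C' := mul_le_mul h1 h2 (abs_nonneg _) (le_max_right _ _)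
  · exact (integrableOn_const hμΩ.ne)
  · filter_upwards with y
    exact ((hF.comp (continuous_id.prodMk continuous_const)).continuousAt).mul continuousAt_const

/-- Nonnegativity of a cooperative function at a point of the boundary of the orthant. -/
lemma coopNonnegAux {n : ℕ} (h : (Fin n → ℝ) → Fin n → ℝ) (i : Fin n)
    (h0 : h 0 i = 0)
    (hdiff : ∀ u : Fin n → ℝ, (∀ k, 0 ≤ u k) → DifferentiableAt ℝ (fun v => h v i) u)
    (hcoop : ∀ u : Fin n → ℝ, (∀ k, 0 ≤ u k) → ∀ k, k ≠ i →
      0 ≤ fderiv ℝ (fun v => h v i) u (Pi.single k 1))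
    (v : Fin n → ℝ) (hv : ∀ k, 0 ≤ v k) (hvi : v i = 0) : 0 ≤ h v i := by
  classical
  set φ : ℝ → ℝ := fun t => h (t • v) i with hφ
  have hsm : ∀ t : ℝ, 0 ≤ t → (∀ k, 0 ≤ (t • v) k) := fun t ht k => mul_nonneg ht (hv k)
  have hder : ∀ t : ℝ, 0 ≤ t →
      HasDerivAt φ ((fderiv ℝ (fun w => h w i) (t • v)) v) t := by
    intro t ht
    have h1 : HasFDerivAt (fun w => h w i) (fderiv ℝ (fun w => h w i) (t • v)) (t • v) :=
      (hdiff _ (hsm t ht)).hasFDerivAt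
    have h2 : HasDerivAt (fun s : ℝ => s • v) v t := by
      simpa using (hasDerivAt_id t).smul_const v
    exact h1.comp_hasDerivAt t h2
  have hvsum : v = ∑ k, v k • (Pi.single k (1 : ℝ) : Fin n → ℝ) := by
    funext j
    simp [Finset.sum_apply, Pi.single_apply, mul_ite]
  have hdnn : ∀ t : ℝ, 0 ≤ t → 0 ≤ (fderiv ℝ (fun w => h w i) (t • v)) v := by
    intro t ht
    set D := fderiv ℝ (fun w => h w i) (t • v) with hD
    have : D v = ∑ k, v k * D (Pi.single k 1) := by
      conv_lhs => rw [hvsum]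
      rw [map_sum]
      simp [smul_eq_mul]
    rw [this]
    apply Finset.sum_nonneg
    intro k _
    rcases eq_or_ne k i with rfl | hk
    · simp [hvi]
    · exact mul_nonneg (hv k) (hcoop _ (hsm t ht) k hk)
  have hcont : ContinuousOn φ (Icc 0 1) := fun t ht =>
    ((hder t ht.1).continuousAt).continuousWithinAt
  have hmono : MonotoneOn φ (Icc (0:ℝ) 1) := by
    apply monotoneOn_of_deriv_nonneg (convex_Icc 0 1) hcont
    · intro t ht
      rw [interior_Icc] at ht
      exact ((hder t ht.1.le).differentiableAt).differentiableWithinAt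
    · intro t ht
      rw [interior_Icc] at ht
      rw [(hder t ht.1.le).deriv]
      exact hdnn t ht.1.le
  have := hmono (left_mem_Icc.2 zero_le_one) (right_mem_Icc.2 zero_le_one) zero_le_one
  simpa [hφ, h0] using this

/-- A square matrix (given entrywise) is irreducible if the index set cannot be split
into two disjoint nonempty sets `I`, `Iᶜ` with `m i k = 0` for `i ∈ I`, `k ∈ Iᶜ`. -/
def MatIrreducible {n : ℕ} (m : Fin n → Fin n → ℝ) : Prop :=
  ∀ I : Set (Fin n), I.Nonempty → Iᶜ.Nonempty → ∃ i ∈ I, ∃ k ∈ Iᶜ, m i k ≠ 0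

set_option maxHeartbeats 1000000 in
/-- Continuity of a bounded positive solution at a point `x₀` where the associated
algebraic system has at most one positive solution (Theorem 3.4). -/
theorem stmt_9 {N n : ℕ} (hn : 1 ≤ n) (Ω : Set (Fin N → ℝ)) (hΩo : IsOpen Ω)
    (hΩb : Bornology.IsBounded Ω) (hΩne : Ω.Nonempty)
    (J : Fin n → (Fin N → ℝ) → (Fin N → ℝ) → ℝ)
    (hJcont : ∀ i, Continuous fun q : (Fin N → ℝ) × (Fin N → ℝ) => J i q.1 q.2)
    (hJnn : ∀ i x y, 0 ≤ J i x y) (hJdiag : ∀ i x, 0 < J i x x)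
    (d : Fin n → ℝ) (hd : ∀ i, 0 < d i)
    (dstar : Fin n → (Fin N → ℝ) → ℝ)
    (hdstar : ∀ i, (∀ x, dstar i x = d i) ∨
      (∀ x, dstar i x = d i * ∫ y in Ω, J i y x))
    (f : (Fin N → ℝ) → (Fin n → ℝ) → Fin n → ℝ)
    (hfc : ∀ i, ContinuousOn (fun q : (Fin N → ℝ) × (Fin n → ℝ) => f q.1 q.2 i)
      ((closure Ω) ×ˢ (univ : Set (Fin n → ℝ))))
    -- (H1)
    (hf0 : ∀ x ∈ closure Ω, ∀ i, f x 0 i = 0)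
    (hdiff : ∀ x ∈ closure Ω, ∀ u : Fin n → ℝ, (∀ k, 0 ≤ u k) →
      ∀ i, DifferentiableAt ℝ (fun v => f x v i) u)
    (hDcont : ∀ i k, ContinuousOn
      (fun q : (Fin N → ℝ) × (Fin n → ℝ) =>
        fderiv ℝ (fun v => f q.1 v i) q.2 (Pi.single k 1))
      ((closure Ω) ×ˢ {u : Fin n → ℝ | ∀ k, 0 ≤ u k}))
    (hcoop : ∀ x ∈ closure Ω, ∀ u : Fin n → ℝ, (∀ k, 0 ≤ u k) →
      ∀ i k, k ≠ i → 0 ≤ fderiv ℝ (fun v => f x v i) u (Pi.single k 1))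
    -- (H2)
    (xt : Fin N → ℝ) (hxt : xt ∈ closure Ω)
    (hirr : ∀ u : Fin n → ℝ, (∀ k, 0 ≤ u k) →
      MatIrreducible fun i k => fderiv ℝ (fun v => f xt v i) u (Pi.single k 1))
    -- a bounded positive solution
    (U : (Fin N → ℝ) → Fin n → ℝ)
    (hUm : ∀ i, Measurable fun x => U x i)
    (hUb : ∃ C, ∀ x ∈ closure Ω, ∀ i, |U x i| ≤ C)
    (hUpos : ∀ x ∈ closure Ω, ∀ i, 0 < U x i)
    (hUeq : ∀ x ∈ closure Ω, ∀ i,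
      d i * (∫ y in Ω, J i x y * U y i) - dstar i x * U x i + f x (U x) i = 0)
    -- the algebraic system at x₀ has at most one positive solution
    (x₀ : Fin N → ℝ) (hx₀ : x₀ ∈ closure Ω)
    (huniq : ∀ v w : Fin n → ℝ, (∀ i, 0 < v i) → (∀ i, 0 < w i) →
      (∀ i, d i * (∫ y in Ω, J i x₀ y * U y i) - dstar i x₀ * v i + f x₀ v i = 0) →
      (∀ i, d i * (∫ y in Ω, J i x₀ y * U y i) - dstar i x₀ * w i + f x₀ w i = 0) →
      v = w) :
    ContinuousWithinAt U (closure Ω) x₀ := by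
  classical
  obtain ⟨C, hC⟩ := hUb
  have hΩm : MeasurableSet Ω := hΩo.measurableSet
  have hCnn : 0 ≤ C := le_trans (abs_nonneg _) (hC x₀ hx₀ ⟨0, hn⟩)
  -- continuity of the integral terms
  have hgc : ∀ i, Continuous fun x => ∫ y in Ω, J i x y * U y i := fun i =>
    contIntAux Ω hΩm hΩb (fun q => J i q.1 q.2) (hJcont i) (fun y => U y i) (hUm i) C
      (fun y hy => hC y (subset_closure hy) i)
  have hdc : ∀ i, Continuous (dstar i) := by
    intro i
    rcases hdstar i with h | h
    · have he : dstar i = fun _ => d i := funext h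
      rw [he]; exact continuous_const
    · have he : dstar i = fun x => d i * ∫ y in Ω, J i y x := funext h
      rw [he]
      have hc := contIntAux Ω hΩm hΩb (fun q => J i q.2 q.1)
        ((hJcont i).comp continuous_swap) (fun _ => (1 : ℝ)) measurable_const 1
        (fun y _ => by norm_num)
      simp only [mul_one] at hc
      exact continuous_const.mul hc
  -- positivity of the integral at x₀
  have hgpos : ∀ i, 0 < ∫ y in Ω, J i x₀ y * U y i := by
    intro i
    have hcJ : Continuous fun y => J i x₀ y :=
      (hJcont i).comp (continuous_const.prodMk continuous_id)
    obtain ⟨M, hM⟩ := hΩb.isCompact_closure.exists_bound_of_continuousOn hcJ.continuousOn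
    have hint : IntegrableOn (fun y => J i x₀ y * U y i) Ω := by
      have hconst : IntegrableOn (fun _ : Fin N → ℝ => M * C) Ω :=
        integrableOn_const hΩb.measure_lt_top.ne
      refine hconst.mono' ((hcJ.measurable.mul (hUm i)).aestronglyMeasurable) ?_
      rw [ae_restrict_iff' hΩm]
      filter_upwards with y hy
      calc ‖J i x₀ y * U y i‖ = |J i x₀ y| * |U y i| := abs_mul _ _
        _ ≤ M * C := mul_le_mul (hM y (subset_closure hy)) (hC y (subset_closure hy) i)
            (abs_nonneg _) (le_trans (abs_nonneg _) (hM y (subset_closure hy)))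
    have hnn : 0 ≤ᵐ[volume.restrict Ω] fun y => J i x₀ y * U y i := by
      filter_upwards [ae_restrict_mem hΩm] with y hy
      exact mul_nonneg (hJnn i x₀ y) (hUpos y (subset_closure hy) i).le
    rw [setIntegral_pos_iff_support_of_nonneg_ae hnn hint]
    set V := {y | 0 < J i x₀ y} with hV
    have hVo : IsOpen V := isOpen_lt continuous_const hcJ
    have hx₀V : x₀ ∈ V := hJdiag i x₀
    have hsub : V ∩ Ω ⊆ Function.support (fun y => J i x₀ y * U y i) ∩ Ω := by
      rintro y ⟨hy1, hy2⟩
      exact ⟨ne_of_gt (mul_pos hy1 (hUpos y (subset_closure hy2) i)), hy2⟩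
    calc (0 : ℝ≥0∞) < volume (V ∩ Ω) :=
        (hVo.inter hΩo).measure_pos volume (mem_closure_iff.1 hx₀ V hVo hx₀V)
      _ ≤ _ := measure_mono hsub
  -- sequential argument
  rw [ContinuousWithinAt]
  rw [tendsto_iff_seq_tendsto]
  intro u hu
  obtain ⟨hu1, hu2⟩ := tendsto_nhdsWithin_iff.1 hu
  set w : ℕ → (Fin N → ℝ) := fun l => if u l ∈ closure Ω then u l else x₀ with hw
  have hwmem : ∀ l, w l ∈ closure Ω := by
    intro l; by_cases h : u l ∈ closure Ω <;> simp [hw, h, hx₀]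
  have hweq : w =ᶠ[atTop] u := hu2.mono fun l h => by simp [hw, h]
  have hwt : Tendsto w atTop (𝓝 x₀) := hu1.congr' hweq.symm
  suffices hkey : Tendsto (fun l => U (w l)) atTop (𝓝 (U x₀)) by
    exact hkey.congr' (hweq.mono fun l h => congrArg U h)
  apply tendsto_of_subseq_tendsto
  intro ns hns
  have hmem : ∀ m, U (w (ns m)) ∈ Metric.closedBall (0 : Fin n → ℝ) C := by
    intro m
    rw [Metric.mem_closedBall, dist_pi_le_iff hCnn]
    intro i
    simpa [Real.dist_eq] using hC _ (hwmem _) i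
  obtain ⟨v, hvK, φ, hφ, hφt⟩ :=
    (isCompact_closedBall (0 : Fin n → ℝ) C).tendsto_subseq hmem
  refine ⟨φ, ?_⟩
  set z : ℕ → (Fin N → ℝ) := fun m => w (ns (φ m)) with hz
  have hzmem : ∀ m, z m ∈ closure Ω := fun m => hwmem _
  have hzt : Tendsto z atTop (𝓝 x₀) := hwt.comp (hns.comp hφ.tendsto_atTop)
  have hUz : Tendsto (fun m => U (z m)) atTop (𝓝 v) := hφt
  have hUzi : ∀ i, Tendsto (fun m => U (z m) i) atTop (𝓝 (v i)) := fun i =>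
    tendsto_pi_nhds.1 hUz i
  have hvnn : ∀ i, 0 ≤ v i := fun i =>
    ge_of_tendsto (hUzi i) (Eventually.of_forall fun m => (hUpos _ (hzmem m) i).le)
  have hveq : ∀ i,
      d i * (∫ y in Ω, J i x₀ y * U y i) - dstar i x₀ * v i + f x₀ v i = 0 := by
    intro i
    have h1 : Tendsto (fun m => d i * ∫ y in Ω, J i (z m) y * U y i) atTop
        (𝓝 (d i * ∫ y in Ω, J i x₀ y * U y i)) :=
      tendsto_const_nhds.mul (((hgc i).tendsto x₀).comp hzt)
    have h2 : Tendsto (fun m => dstar i (z m) * U (z m) i) atTop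
        (𝓝 (dstar i x₀ * v i)) :=
      (((hdc i).tendsto x₀).comp hzt).mul (hUzi i)
    have h3 : Tendsto (fun m => f (z m) (U (z m)) i) atTop (𝓝 (f x₀ v i)) := by
      have hp : Tendsto (fun m => (z m, U (z m))) atTop
          (𝓝[(closure Ω) ×ˢ (univ : Set (Fin n → ℝ))] (x₀, v)) := by
        apply tendsto_nhdsWithin_of_tendsto_nhds_of_eventually_within
        · exact hzt.prodMk_nhds hUz
        · filter_upwards with m
          exact ⟨hzmem m, mem_univ _⟩
      exact ((hfc i) (x₀, v) ⟨hx₀, mem_univ _⟩).tendsto.comp hp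
    have hall : Tendsto (fun m =>
        d i * (∫ y in Ω, J i (z m) y * U y i) - dstar i (z m) * U (z m) i
          + f (z m) (U (z m)) i) atTop
        (𝓝 (d i * (∫ y in Ω, J i x₀ y * U y i) - dstar i x₀ * v i + f x₀ v i)) :=
      (h1.sub h2).add h3
    have hzero : (fun m =>
        d i * (∫ y in Ω, J i (z m) y * U y i) - dstar i (z m) * U (z m) i
          + f (z m) (U (z m)) i) = fun _ => (0 : ℝ) :=
      funext fun m => hUeq (z m) (hzmem m) i
    rw [hzero] at hall
    exact (tendsto_nhds_unique hall tendsto_const_nhds)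
  have hvpos : ∀ i, 0 < v i := by
    intro i
    rcases (hvnn i).lt_or_eq with h | h
    · exact h
    · exfalso
      have hfge : 0 ≤ f x₀ v i :=
        coopNonnegAux (f x₀) i (hf0 x₀ hx₀ i) (fun u' hu' => hdiff x₀ hx₀ u' hu' i)
          (fun u' hu' k hk => hcoop x₀ hx₀ u' hu' i k hk) v hvnn h.symm
      have hvi := hveq i
      rw [← h] at hvi
      nlinarith [hgpos i, hd i, mul_pos (hd i) (hgpos i)]
  have hfin := huniq v (U x₀) hvpos (hUpos x₀ hx₀) hveq (hUeq x₀ hx₀)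
  rw [← hfin]
  exact hφt
end

section
/- Suppose λ_p(ℬ̲^ε) and λ_p(ℬ̄^ε) are the principal eigenvalues of the lower and upper control operators, with B̲^ε(x) ≤ B(x) ≤ B̄^ε(x) = B̲^ε(x) + 3εI entrywise for every x. Then λ_p(ℬ̲^ε) ≤ inf_{φ ∈ X⁺⁺} sup_{x,i} [d_i ∫_Ω J_i(x,y)φ_i(y)dy + Σ_k b_{ik}(x)φ_k(x)]/φ_i(x) ≤ λ_p(ℬ̄^ε) = λ_p(ℬ̲^ε) + 3ε. Consequently, as ε → 0⁺ both λ_p(ℬ̲^ε) and λ_p(ℬ̄^ε) converge to a common limit λ(ℬ), and λ(ℬ) equals the inf–sup Collatz–Wielandt quantity for ℬ. -/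
open MeasureTheory Set Filter

section AuxCW

variable {N n : ℕ}

variable (Ω : Set (Fin N → ℝ))
  (J : Fin n → (Fin N → ℝ) → (Fin N → ℝ) → ℝ) (d : Fin n → ℝ)

/-- The quotient appearing in the Collatz–Wielandt quantities. -/
private noncomputable def cwFun (B : (Fin N → ℝ) → Fin n → Fin n → ℝ)
    (φ : Fin n → (Fin N → ℝ) → ℝ) (q : ↥(closure Ω) × Fin n) : ℝ :=
  ((d q.2 * ∫ y in Ω, J q.2 (↑q.1) y * φ q.2 y) +
    ∑ k, B (↑q.1) q.2 k * φ k (↑q.1)) / φ q.2 (↑q.1)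

private lemma cw_bddAbove (hn : 1 ≤ n) (hΩo : IsOpen Ω) (hΩb : Bornology.IsBounded Ω)
    (hΩne : Ω.Nonempty)
    (hJcont : ∀ i, Continuous fun q : (Fin N → ℝ) × (Fin N → ℝ) => J i q.1 q.2)
    (hd : ∀ i, 0 < d i)
    (B : (Fin N → ℝ) → Fin n → Fin n → ℝ)
    (hBcont : ∀ i k, ContinuousOn (fun x => B x i k) (closure Ω))
    (φ : Fin n → (Fin N → ℝ) → ℝ)
    (hφ : ∀ i, ContinuousOn (φ i) (closure Ω) ∧ ∀ x ∈ closure Ω, 0 < φ i x) :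
    BddAbove (Set.range (cwFun Ω J d B φ)) := by
  have hK : IsCompact (closure Ω) := hΩb.isCompact_closure
  have hKne : (closure Ω).Nonempty := hΩne.closure
  haveI : NeZero n := ⟨by omega⟩
  -- bounds on φ
  choose Mφ hMφ using fun i => hK.exists_bound_of_continuousOn (hφ i).1
  have hMφ' : ∀ i (x : Fin N → ℝ), x ∈ closure Ω → |φ i x| ≤ Mφ i := by
    intro i x hx; simpa [Real.norm_eq_abs] using hMφ i x hx
  have hMφ0 : ∀ i, 0 ≤ Mφ i := fun i =>
    le_trans (abs_nonneg _) (hMφ' i _ hKne.choose_spec)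
  -- positive minimum of φ
  choose xm hxmK hxm using fun i => hK.exists_isMinOn hKne (hφ i).1
  have hm : ∀ i, 0 < φ i (xm i) := fun i => (hφ i).2 _ (hxmK i)
  -- bound on J
  choose CJ hCJ using fun i =>
    (hK.prod hK).exists_bound_of_continuousOn (hJcont i).continuousOn
  have hCJ' : ∀ i (x y : Fin N → ℝ), x ∈ closure Ω → y ∈ closure Ω →
      |J i x y| ≤ CJ i := by
    intro i x y hx hy
    simpa [Real.norm_eq_abs] using hCJ i (x, y) (Set.mk_mem_prod hx hy)
  -- bound on B
  choose CB hCB using fun i k => hK.exists_bound_of_continuousOn (hBcont i k)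
  have hCB' : ∀ i k (x : Fin N → ℝ), x ∈ closure Ω → |B x i k| ≤ CB i k := by
    intro i k x hx; simpa [Real.norm_eq_abs] using hCB i k x hx
  set vol := (volume Ω).toReal with hvoldef
  have hvol : volume Ω < ⊤ := hΩb.measure_lt_top
  -- bound on the integral
  have hInt : ∀ (i) (x : Fin N → ℝ), x ∈ closure Ω →
      |∫ y in Ω, J i x y * φ i y| ≤ CJ i * Mφ i * vol := by
    intro i x hx
    have hmeas : AEStronglyMeasurable (fun y => J i x y * φ i y)
        (volume.restrict Ω) := by
      apply ContinuousOn.aestronglyMeasurable ?_ hΩo.measurableSet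
      exact (((hJcont i).comp (Continuous.prodMk_right x)).continuousOn).mul
        ((hφ i).1.mono subset_closure)
    have hb : ∀ y ∈ Ω, ‖J i x y * φ i y‖ ≤ CJ i * Mφ i := by
      intro y hy
      have hyK : y ∈ closure Ω := subset_closure hy
      rw [Real.norm_eq_abs, abs_mul]
      exact mul_le_mul (hCJ' i x y hx hyK) (hMφ' i y hyK) (abs_nonneg _)
        (le_trans (abs_nonneg _) (hCJ' i x x hx hx))
    simpa [Real.norm_eq_abs, hvoldef, measureReal_def] using
      norm_setIntegral_le_of_norm_le_const hvol hb
  -- numerator bound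
  have hnum : ∀ (i) (x : Fin N → ℝ), x ∈ closure Ω →
      (d i * ∫ y in Ω, J i x y * φ i y) + ∑ k, B x i k * φ k x ≤
        d i * (CJ i * Mφ i * vol) + ∑ k, CB i k * Mφ k := by
    intro i x hx
    have h1 : d i * ∫ y in Ω, J i x y * φ i y ≤ d i * (CJ i * Mφ i * vol) :=
      mul_le_mul_of_nonneg_left (le_trans (le_abs_self _) (hInt i x hx)) (hd i).le
    have h2 : ∑ k, B x i k * φ k x ≤ ∑ k, CB i k * Mφ k := by
      refine Finset.sum_le_sum fun k _ => ?_
      calc B x i k * φ k x ≤ |B x i k * φ k x| := le_abs_self _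
        _ = |B x i k| * |φ k x| := abs_mul _ _
        _ ≤ CB i k * Mφ k :=
          mul_le_mul (hCB' i k x hx) (hMφ' k x hx) (abs_nonneg _)
            (le_trans (abs_nonneg _) (hCB' i k x hx))
    linarith
  -- assemble
  refine ⟨Finset.univ.sup' Finset.univ_nonempty
    (fun i => max 0 (d i * (CJ i * Mφ i * vol) + ∑ k, CB i k * Mφ k) /
      φ i (xm i)), ?_⟩
  rintro _ ⟨⟨⟨x, hx⟩, i⟩, rfl⟩
  refine le_trans ?_ (Finset.le_sup' _ (Finset.mem_univ i))
  show ((d i * ∫ y in Ω, J i x y * φ i y) + ∑ k, B x i k * φ k x) / φ i x ≤ _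
  exact div_le_div₀ (le_max_left _ _) (le_trans (hnum i x hx) (le_max_right _ _))
    (hm i) (hxm i hx)

private lemma real_ciSup_add {ι : Type*} [Nonempty ι] {f : ι → ℝ}
    (hf : BddAbove (Set.range f)) (c : ℝ) :
    (⨆ i, (f i + c)) = (⨆ i, f i) + c := by
  obtain ⟨M, hM⟩ := hf
  have hM' : ∀ i, f i ≤ M := fun i => hM ⟨i, rfl⟩
  have hbdd : BddAbove (Set.range fun i => f i + c) := by
    refine ⟨M + c, ?_⟩; rintro _ ⟨i, rfl⟩; exact add_le_add_left (hM' i) c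
  apply le_antisymm
  · exact ciSup_le fun i => add_le_add_left (le_ciSup ⟨M, hM⟩ i) c
  · have h1 : (⨆ i, f i) ≤ (⨆ i, (f i + c)) - c :=
      ciSup_le fun i => le_sub_iff_add_le.2 (le_ciSup hbdd i)
    linarith

private lemma real_ciInf_add {ι : Type*} [Nonempty ι] {f : ι → ℝ}
    (hf : BddBelow (Set.range f)) (c : ℝ) :
    (⨅ i, (f i + c)) = (⨅ i, f i) + c := by
  obtain ⟨M, hM⟩ := hf
  have hM' : ∀ i, M ≤ f i := fun i => hM ⟨i, rfl⟩
  have hbdd : BddBelow (Set.range fun i => f i + c) := by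
    refine ⟨M + c, ?_⟩; rintro _ ⟨i, rfl⟩; exact add_le_add_left (hM' i) c
  apply le_antisymm
  · have h1 : (⨅ i, (f i + c)) - c ≤ ⨅ i, f i :=
      le_ciInf fun i => sub_le_iff_le_add.2 (ciInf_le hbdd i)
    linarith
  · exact le_ciInf fun i => add_le_add_left (ciInf_le ⟨M, hM⟩ i) c

private lemma cw_bddBelow (hn : 1 ≤ n) (hΩo : IsOpen Ω) (hΩb : Bornology.IsBounded Ω)
    (hΩne : Ω.Nonempty)
    (hJcont : ∀ i, Continuous fun q : (Fin N → ℝ) × (Fin N → ℝ) => J i q.1 q.2)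
    (hJnn : ∀ i x y, 0 ≤ J i x y)
    (hd : ∀ i, 0 < d i)
    (B : (Fin N → ℝ) → Fin n → Fin n → ℝ)
    (hBcont : ∀ i k, ContinuousOn (fun x => B x i k) (closure Ω))
    (hBcoop : ∀ x ∈ closure Ω, ∀ i k, i ≠ k → 0 ≤ B x i k) :
    BddBelow (Set.range fun φ : {φ : Fin n → (Fin N → ℝ) → ℝ //
        ∀ i, ContinuousOn (φ i) (closure Ω) ∧ ∀ x ∈ closure Ω, 0 < φ i x} =>
      ⨆ q, cwFun Ω J d B φ.1 q) := by
  obtain ⟨x₀, hx₀⟩ := hΩne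
  have hx₀K : x₀ ∈ closure Ω := subset_closure hx₀
  set i₀ : Fin n := ⟨0, hn⟩ with hi₀
  refine ⟨B x₀ i₀ i₀, ?_⟩
  rintro _ ⟨φ, rfl⟩
  have hbdd := cw_bddAbove Ω J d hn hΩo hΩb ⟨x₀, hx₀⟩ hJcont hd B hBcont φ.1 φ.2
  refine le_trans ?_ (le_ciSup hbdd (⟨x₀, hx₀K⟩, i₀))
  show B x₀ i₀ i₀ ≤
    ((d i₀ * ∫ y in Ω, J i₀ x₀ y * φ.1 i₀ y) + ∑ k, B x₀ i₀ k * φ.1 k x₀) /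
      φ.1 i₀ x₀
  have hφ0 : 0 < φ.1 i₀ x₀ := (φ.2 i₀).2 x₀ hx₀K
  rw [le_div_iff₀ hφ0]
  have hI : 0 ≤ ∫ y in Ω, J i₀ x₀ y * φ.1 i₀ y :=
    setIntegral_nonneg hΩo.measurableSet fun y hy =>
      mul_nonneg (hJnn _ _ _) ((φ.2 i₀).2 y (subset_closure hy)).le
  have hdI : 0 ≤ d i₀ * ∫ y in Ω, J i₀ x₀ y * φ.1 i₀ y := mul_nonneg (hd i₀).le hI
  have hdiag : B x₀ i₀ i₀ * φ.1 i₀ x₀ ≤ ∑ k, B x₀ i₀ k * φ.1 k x₀ := by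
    rw [← Finset.sum_erase_add Finset.univ _ (Finset.mem_univ i₀)]
    have h0 : 0 ≤ ∑ k ∈ Finset.univ.erase i₀, B x₀ i₀ k * φ.1 k x₀ :=
      Finset.sum_nonneg fun k hk =>
        mul_nonneg (hBcoop x₀ hx₀K i₀ k (Finset.ne_of_mem_erase hk).symm)
          ((φ.2 k).2 x₀ hx₀K).le
    linarith
  linarith

private lemma cw_infSup_eq (B : (Fin N → ℝ) → Fin n → Fin n → ℝ) :
    infSupCW Ω J d B = ⨅ φ : {φ : Fin n → (Fin N → ℝ) → ℝ //
        ∀ i, ContinuousOn (φ i) (closure Ω) ∧ ∀ x ∈ closure Ω, 0 < φ i x},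
      ⨆ q, cwFun Ω J d B φ.1 q := rfl

private lemma cw_mono (hn : 1 ≤ n) (hΩo : IsOpen Ω) (hΩb : Bornology.IsBounded Ω)
    (hΩne : Ω.Nonempty)
    (hJcont : ∀ i, Continuous fun q : (Fin N → ℝ) × (Fin N → ℝ) => J i q.1 q.2)
    (hJnn : ∀ i x y, 0 ≤ J i x y)
    (hd : ∀ i, 0 < d i)
    (B1 B2 : (Fin N → ℝ) → Fin n → Fin n → ℝ)
    (hB1cont : ∀ i k, ContinuousOn (fun x => B1 x i k) (closure Ω))
    (hB1coop : ∀ x ∈ closure Ω, ∀ i k, i ≠ k → 0 ≤ B1 x i k)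
    (hB2cont : ∀ i k, ContinuousOn (fun x => B2 x i k) (closure Ω))
    (hle : ∀ x ∈ closure Ω, ∀ i k, B1 x i k ≤ B2 x i k) :
    infSupCW Ω J d B1 ≤ infSupCW Ω J d B2 := by
  rw [cw_infSup_eq, cw_infSup_eq]
  refine ciInf_mono (cw_bddBelow Ω J d hn hΩo hΩb hΩne hJcont hJnn hd B1
    hB1cont hB1coop) fun φ => ?_
  refine ciSup_mono (cw_bddAbove Ω J d hn hΩo hΩb hΩne hJcont hd B2
    hB2cont φ.1 φ.2) fun q => ?_
  obtain ⟨⟨x, hx⟩, i⟩ := q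
  show (_ + ∑ k, B1 x i k * φ.1 k x) / φ.1 i x ≤
    (_ + ∑ k, B2 x i k * φ.1 k x) / φ.1 i x
  have hφ0 : 0 < φ.1 i x := (φ.2 i).2 x hx
  refine (div_le_div_iff_of_pos_right hφ0).2 ?_
  refine add_le_add_right (Finset.sum_le_sum fun k _ =>
    mul_le_mul_of_nonneg_right (hle x hx i k) ((φ.2 k).2 x hx).le) _

private lemma cw_shift (hn : 1 ≤ n) (hΩo : IsOpen Ω) (hΩb : Bornology.IsBounded Ω)
    (hΩne : Ω.Nonempty)
    (hJcont : ∀ i, Continuous fun q : (Fin N → ℝ) × (Fin N → ℝ) => J i q.1 q.2)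
    (hJnn : ∀ i x y, 0 ≤ J i x y)
    (hd : ∀ i, 0 < d i)
    (B1 B2 : (Fin N → ℝ) → Fin n → Fin n → ℝ) (c : ℝ)
    (hB1cont : ∀ i k, ContinuousOn (fun x => B1 x i k) (closure Ω))
    (hB1coop : ∀ x ∈ closure Ω, ∀ i k, i ≠ k → 0 ≤ B1 x i k)
    (hB2 : ∀ x i k, B2 x i k = B1 x i k + if i = k then c else 0) :
    infSupCW Ω J d B2 = infSupCW Ω J d B1 + c := by
  obtain ⟨x₀, hx₀⟩ := hΩne
  haveI : Nonempty (↥(closure Ω) × Fin n) :=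
    ⟨(⟨x₀, subset_closure hx₀⟩, ⟨0, hn⟩)⟩
  haveI : Nonempty {φ : Fin n → (Fin N → ℝ) → ℝ //
      ∀ i, ContinuousOn (φ i) (closure Ω) ∧ ∀ x ∈ closure Ω, 0 < φ i x} :=
    ⟨⟨fun _ _ => 1, fun _ => ⟨continuousOn_const, fun _ _ => one_pos⟩⟩⟩
  rw [cw_infSup_eq, cw_infSup_eq]
  have hpt : ∀ φ : {φ : Fin n → (Fin N → ℝ) → ℝ //
      ∀ i, ContinuousOn (φ i) (closure Ω) ∧ ∀ x ∈ closure Ω, 0 < φ i x},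
      ∀ q, cwFun Ω J d B2 φ.1 q = cwFun Ω J d B1 φ.1 q + c := by
    rintro φ ⟨⟨x, hx⟩, i⟩
    show (_ + ∑ k, B2 x i k * φ.1 k x) / φ.1 i x =
      (_ + ∑ k, B1 x i k * φ.1 k x) / φ.1 i x + c
    have hφ0 : φ.1 i x ≠ 0 := ne_of_gt ((φ.2 i).2 x hx)
    have hsum : ∑ k, B2 x i k * φ.1 k x =
        (∑ k, B1 x i k * φ.1 k x) + c * φ.1 i x := by
      simp only [hB2, add_mul, Finset.sum_add_distrib, ite_mul, zero_mul]
      rw [Finset.sum_ite_eq]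
      simp
    rw [hsum, ← add_assoc, add_div, mul_div_assoc, div_self hφ0, mul_one]
  have hsup : ∀ φ : {φ : Fin n → (Fin N → ℝ) → ℝ //
      ∀ i, ContinuousOn (φ i) (closure Ω) ∧ ∀ x ∈ closure Ω, 0 < φ i x},
      (⨆ q, cwFun Ω J d B2 φ.1 q) = (⨆ q, cwFun Ω J d B1 φ.1 q) + c := by
    intro φ
    rw [iSup_congr (hpt φ)]
    exact real_ciSup_add
      (cw_bddAbove Ω J d hn hΩo hΩb ⟨x₀, hx₀⟩ hJcont hd B1 hB1cont φ.1 φ.2) c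
  rw [iInf_congr hsup]
  exact real_ciInf_add
    (cw_bddBelow Ω J d hn hΩo hΩb ⟨x₀, hx₀⟩ hJcont hJnn hd B1 hB1cont hB1coop) c

end AuxCW

/-- The sandwich of the Collatz–Wielandt quantity of ℬ between the principal
eigenvalues of the lower and upper control operators, and the resulting common limit
`λ(ℬ)` as `ε → 0⁺` (Step 3 of the proof of Theorem A). -/
theorem stmt_12 {N n : ℕ} (hn : 1 ≤ n) (Ω : Set (Fin N → ℝ)) (hΩo : IsOpen Ω)
    (hΩb : Bornology.IsBounded Ω) (hΩne : Ω.Nonempty)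
    (J : Fin n → (Fin N → ℝ) → (Fin N → ℝ) → ℝ)
    (hJcont : ∀ i, Continuous fun q : (Fin N → ℝ) × (Fin N → ℝ) => J i q.1 q.2)
    (hJnn : ∀ i x y, 0 ≤ J i x y) (hJdiag : ∀ i x, 0 < J i x x)
    (d : Fin n → ℝ) (hd : ∀ i, 0 < d i)
    (b : (Fin N → ℝ) → Fin n → Fin n → ℝ)
    (hbcont : ∀ i k, ContinuousOn (fun x => b x i k) (closure Ω))
    (hbcoop : ∀ x ∈ closure Ω, ∀ i k, i ≠ k → 0 ≤ b x i k)
    (Bl Bu : ℝ → (Fin N → ℝ) → Fin n → Fin n → ℝ)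
    (laml lamu : ℝ → ℝ)
    (hBlcont : ∀ ε > (0:ℝ), ∀ i k, ContinuousOn (fun x => Bl ε x i k) (closure Ω))
    (hBlcoop : ∀ ε > (0:ℝ), ∀ x ∈ closure Ω, ∀ i k, i ≠ k → 0 ≤ Bl ε x i k)
    (hBu : ∀ ε > (0:ℝ), ∀ x i k,
      Bu ε x i k = Bl ε x i k + if i = k then 3 * ε else 0)
    (hsand : ∀ ε > (0:ℝ), ∀ x ∈ closure Ω, ∀ i k,
      Bl ε x i k ≤ b x i k ∧ b x i k ≤ Bu ε x i k)
    -- each control operator satisfies the Collatz–Wielandt characterization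
    (hlaml : ∀ ε > (0:ℝ),
      laml ε = infSupCW Ω J d (Bl ε) ∧ laml ε = supInfCW Ω J d (Bl ε))
    (hlamu : ∀ ε > (0:ℝ),
      lamu ε = infSupCW Ω J d (Bu ε) ∧ lamu ε = supInfCW Ω J d (Bu ε)) :
    (∀ ε > (0:ℝ), laml ε ≤ infSupCW Ω J d b ∧
      infSupCW Ω J d b ≤ lamu ε ∧ lamu ε = laml ε + 3 * ε) ∧
    Tendsto laml (nhdsWithin 0 (Ioi 0)) (nhds (infSupCW Ω J d b)) ∧
    Tendsto lamu (nhdsWithin 0 (Ioi 0)) (nhds (infSupCW Ω J d b)) := by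
  set L := infSupCW Ω J d b with hL
  have part1 : ∀ ε > (0:ℝ), laml ε ≤ L ∧ L ≤ lamu ε ∧ lamu ε = laml ε + 3 * ε := by
    intro ε hε
    have hBucont : ∀ i k, ContinuousOn (fun x => Bu ε x i k) (closure Ω) := by
      intro i k
      have : ContinuousOn (fun x => Bl ε x i k + if i = k then 3 * ε else 0)
          (closure Ω) := (hBlcont ε hε i k).add continuousOn_const
      simpa only [hBu ε hε] using this
    have hshift : infSupCW Ω J d (Bu ε) = infSupCW Ω J d (Bl ε) + 3 * ε :=
      cw_shift Ω J d hn hΩo hΩb hΩne hJcont hJnn hd (Bl ε) (Bu ε) (3 * ε)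
        (hBlcont ε hε) (hBlcoop ε hε) (hBu ε hε)
    refine ⟨?_, ?_, ?_⟩
    · rw [(hlaml ε hε).1]
      exact cw_mono Ω J d hn hΩo hΩb hΩne hJcont hJnn hd (Bl ε) b
        (hBlcont ε hε) (hBlcoop ε hε) hbcont
        (fun x hx i k => (hsand ε hε x hx i k).1)
    · rw [(hlamu ε hε).1]
      exact cw_mono Ω J d hn hΩo hΩb hΩne hJcont hJnn hd b (Bu ε)
        hbcont hbcoop hBucont (fun x hx i k => (hsand ε hε x hx i k).2)
    · rw [(hlamu ε hε).1, (hlaml ε hε).1, hshift]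
  refine ⟨part1, ?_, ?_⟩
  · -- laml → L
    have hg : Tendsto (fun ε : ℝ => L - 3 * ε) (nhdsWithin 0 (Ioi 0)) (nhds L) := by
      have h0 : Tendsto (fun ε : ℝ => L - 3 * ε) (nhds 0) (nhds (L - 3 * 0)) :=
        tendsto_const_nhds.sub (tendsto_const_nhds.mul tendsto_id)
      simpa using h0.mono_left nhdsWithin_le_nhds
    refine tendsto_of_tendsto_of_tendsto_of_le_of_le' hg tendsto_const_nhds ?_ ?_
    · filter_upwards [self_mem_nhdsWithin] with ε hε
      have h := part1 ε hε
      linarith [h.1, h.2.1, h.2.2]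
    · filter_upwards [self_mem_nhdsWithin] with ε hε
      exact (part1 ε hε).1
  · -- lamu → L
    have hh : Tendsto (fun ε : ℝ => L + 3 * ε) (nhdsWithin 0 (Ioi 0)) (nhds L) := by
      have h0 : Tendsto (fun ε : ℝ => L + 3 * ε) (nhds 0) (nhds (L + 3 * 0)) :=
        tendsto_const_nhds.add (tendsto_const_nhds.mul tendsto_id)
      simpa using h0.mono_left nhdsWithin_le_nhds
    refine tendsto_of_tendsto_of_tendsto_of_le_of_le' tendsto_const_nhds hh ?_ ?_
    · filter_upwards [self_mem_nhdsWithin] with ε hε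
      exact (part1 ε hε).2.1
    · filter_upwards [self_mem_nhdsWithin] with ε hε
      have h := part1 ε hε
      linarith [h.1, h.2.1, h.2.2]
end

section
/- Let 𝒜 : [C(closure Ω)]^n → [C(closure Ω)]^n be given by 𝒜_i[φ](x) = d_i ∫_Ω J_i(x,y)φ_i(y)dy + Σ_k c_{ik}(x)φ_k(x) with continuous cooperative C(x). If there exists φ ∈ X⁺⁺ (strictly positive continuous on the compact closure of Ω) and μ ∈ ℝ with 𝒜[φ] ≥ μφ componentwise, and 𝒜 has a principal eigenvalue λ_p with strictly positive eigenfunction ψ ∈ X⁺⁺, then λ_p ≥ μ. -/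
open MeasureTheory Set

/-- Collatz–Wielandt lower bound: if `𝒜[φ] ≥ μφ` for some strictly positive continuous
`φ` and `𝒜` has a principal eigenvalue `λ_p` with strictly positive eigenfunction,
then `λ_p ≥ μ`. -/
theorem stmt_16 {N n : ℕ} (hn : 1 ≤ n) (Ω : Set (Fin N → ℝ)) (hΩo : IsOpen Ω)
    (hΩb : Bornology.IsBounded Ω) (hΩne : Ω.Nonempty)
    (J : Fin n → (Fin N → ℝ) → (Fin N → ℝ) → ℝ)
    (hJcont : ∀ i, Continuous fun q : (Fin N → ℝ) × (Fin N → ℝ) => J i q.1 q.2)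
    (hJnn : ∀ i x y, 0 ≤ J i x y)
    (d : Fin n → ℝ) (hd : ∀ i, 0 < d i)
    (c : (Fin N → ℝ) → Fin n → Fin n → ℝ)
    (hccont : ∀ i k, ContinuousOn (fun x => c x i k) (closure Ω))
    (hccoop : ∀ x ∈ closure Ω, ∀ i k, i ≠ k → 0 ≤ c x i k)
    (μ lamp : ℝ) (φ ψ : Fin n → (Fin N → ℝ) → ℝ)
    (hφ : ∀ i, ContinuousOn (φ i) (closure Ω) ∧ ∀ x ∈ closure Ω, 0 < φ i x)
    (hψ : ∀ i, ContinuousOn (ψ i) (closure Ω) ∧ ∀ x ∈ closure Ω, 0 < ψ i x)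
    (hAφ : ∀ i, ∀ x ∈ closure Ω,
      μ * φ i x ≤ (d i * ∫ y in Ω, J i x y * φ i y) + ∑ k, c x i k * φ k x)
    (hψeig : ∀ i, ∀ x ∈ closure Ω,
      (d i * ∫ y in Ω, J i x y * ψ i y) + ∑ k, c x i k * ψ k x = lamp * ψ i x) :
    μ ≤ lamp := by
  have hK : IsCompact (closure Ω) :=
    Metric.isCompact_of_isClosed_isBounded isClosed_closure hΩb.closure
  have hKne : (closure Ω).Nonempty := hΩne.mono subset_closure
  have hnn : Nonempty (Fin n) := ⟨⟨0, hn⟩⟩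
  -- ratio function
  set g : Fin n → (Fin N → ℝ) → ℝ := fun i x => ψ i x / φ i x with hg
  have hgcont : ∀ i, ContinuousOn (g i) (closure Ω) := fun i =>
    (hψ i).1.div (hφ i).1 (fun x hx => ((hφ i).2 x hx).ne')
  -- for each i, a minimizer of g i on closure Ω
  have hmin : ∀ i, ∃ x ∈ closure Ω, ∀ z ∈ closure Ω, g i x ≤ g i z := by
    intro i
    obtain ⟨x, hx, hxmin⟩ := hK.exists_isMinOn hKne (hgcont i)
    exact ⟨x, hx, fun z hz => hxmin hz⟩
  choose xm hxm hxmmin using hmin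
  obtain ⟨i0, _, hi0⟩ := Finset.exists_min_image Finset.univ (fun i => g i (xm i))
    ⟨Classical.arbitrary (Fin n), Finset.mem_univ _⟩
  set x0 := xm i0 with hx0def
  have hx0 : x0 ∈ closure Ω := hxm i0
  set t : ℝ := g i0 x0 with ht
  have htpos : 0 < t := div_pos ((hψ i0).2 x0 hx0) ((hφ i0).2 x0 hx0)
  -- t * φ ≤ ψ everywhere on closure Ω
  have hle : ∀ i, ∀ x ∈ closure Ω, t * φ i x ≤ ψ i x := by
    intro i x hx
    have h1 : t ≤ g i x := le_trans (hi0 i (Finset.mem_univ i)) (hxmmin i x hx)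
    have hφp : 0 < φ i x := (hφ i).2 x hx
    rw [hg] at h1
    calc t * φ i x ≤ (ψ i x / φ i x) * φ i x := by
          exact mul_le_mul_of_nonneg_right h1 hφp.le
      _ = ψ i x := div_mul_cancel₀ _ hφp.ne'
  have heq : t * φ i0 x0 = ψ i0 x0 := by
    have hφp : 0 < φ i0 x0 := (hφ i0).2 x0 hx0
    rw [ht, hg]; field_simp
  -- integrability
  have hcontJ : ∀ i, Continuous (fun y => J i x0 y) := fun i =>
    (hJcont i).comp (Continuous.prodMk_right x0)
  have hintψ : IntegrableOn (fun y => J i0 x0 y * ψ i0 y) Ω := by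
    apply IntegrableOn.mono_set _ subset_closure
    exact ((hcontJ i0).continuousOn.mul (hψ i0).1).integrableOn_compact hK
  have hintφ : IntegrableOn (fun y => t * (J i0 x0 y * φ i0 y)) Ω := by
    apply IntegrableOn.mono_set _ subset_closure
    exact (continuousOn_const.mul ((hcontJ i0).continuousOn.mul (hφ i0).1)).integrableOn_compact hK
  -- integral comparison
  have hintle : t * (∫ y in Ω, J i0 x0 y * φ i0 y) ≤ ∫ y in Ω, J i0 x0 y * ψ i0 y := by
    rw [← integral_const_mul]
    apply setIntegral_mono_on hintφ hintψ hΩo.measurableSet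
    intro y hy
    have := hle i0 y (subset_closure hy)
    have hJ := hJnn i0 x0 y
    nlinarith [mul_le_mul_of_nonneg_left this hJ]
  -- sum comparison
  have hsumle : t * (∑ k, c x0 i0 k * φ k x0) ≤ ∑ k, c x0 i0 k * ψ k x0 := by
    rw [Finset.mul_sum]
    apply Finset.sum_le_sum
    intro k _
    rcases eq_or_ne i0 k with rfl | hne
    · rw [show t * (c x0 i0 i0 * φ i0 x0) = c x0 i0 i0 * (t * φ i0 x0) by ring, heq]
    · have hc := hccoop x0 hx0 i0 k hne
      have := hle k x0 hx0
      nlinarith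
  have hψp : 0 < ψ i0 x0 := (hψ i0).2 x0 hx0
  have key : μ * ψ i0 x0 ≤ lamp * ψ i0 x0 := by
    have h1 := hAφ i0 x0 hx0
    have h2 := hψeig i0 x0 hx0
    have hdpos := hd i0
    have h4 := mul_le_mul_of_nonneg_left hintle hdpos.le
    calc μ * ψ i0 x0 = t * (μ * φ i0 x0) := by rw [← heq]; ring
      _ ≤ t * ((d i0 * ∫ y in Ω, J i0 x0 y * φ i0 y) + ∑ k, c x0 i0 k * φ k x0) :=
          mul_le_mul_of_nonneg_left h1 htpos.le
      _ = d i0 * (t * ∫ y in Ω, J i0 x0 y * φ i0 y)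
          + t * ∑ k, c x0 i0 k * φ k x0 := by ring
      _ ≤ d i0 * (∫ y in Ω, J i0 x0 y * ψ i0 y) + ∑ k, c x0 i0 k * ψ k x0 :=
          add_le_add h4 hsumle
      _ = lamp * ψ i0 x0 := h2
  exact le_of_mul_le_mul_left (by rwa [mul_comm μ, mul_comm lamp] at key) hψp
end

section
/- Let B(x) be a continuous cooperative n×n matrix field on the compact closure of Ω with η := max_x s(B(x)), and suppose the operator ℬ[φ](x) = 𝒥[φ](x) + B(x)φ(x) (with 𝒥_i[φ](x) = d_i ∫_Ω J_i(x,y)φ_i(y)dy, d_i > 0, J_i bounded kernels) has a principal eigenvalue s(ℬ) with strictly positive continuous eigenfunction φ, and let x̄ attain s(B(x̄)) = η with B(x̄) cooperative admitting a positive left eigenvector ψ for the eigenvalue η. If for some i, d_i ∫_Ω J_i(x̄,y)φ_i(y)dy > 0, then s(ℬ) > η. -/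
open MeasureTheory Set

/-- The spectral bound of a real square matrix: the supremum of the real parts of its
(complex) eigenvalues. -/
noncomputable def specBound {n : ℕ} (M : Matrix (Fin n) (Fin n) ℝ) : ℝ :=
  sSup (Complex.re '' spectrum ℂ (M.map (Complex.ofReal)))

/-- If ℬ = 𝒥 + B(x) has a principal eigenvalue `s(ℬ)` with strictly positive
continuous eigenfunction, and at a point `x̄` maximizing `s(B(x))` some nonlocal term
is strictly positive, then `s(ℬ) > η = max_x s(B(x))`. -/
theorem stmt_19 {N n : ℕ} (hn : 1 ≤ n) (Ω : Set (Fin N → ℝ)) (hΩo : IsOpen Ω)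
    (hΩb : Bornology.IsBounded Ω) (hΩne : Ω.Nonempty)
    (J : Fin n → (Fin N → ℝ) → (Fin N → ℝ) → ℝ)
    (hJnn : ∀ i x y, 0 ≤ J i x y)
    (hJb : ∀ i, ∃ C, ∀ x y, |J i x y| ≤ C)
    (d : Fin n → ℝ) (hd : ∀ i, 0 < d i)
    (B : (Fin N → ℝ) → Matrix (Fin n) (Fin n) ℝ)
    (hBcont : ContinuousOn B (closure Ω))
    (hBcoop : ∀ x ∈ closure Ω, ∀ i k, i ≠ k → 0 ≤ B x i k)
    (η : ℝ)
    (xb : Fin N → ℝ) (hxb : xb ∈ closure Ω)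
    (hηmax : ∀ x ∈ closure Ω, specBound (B x) ≤ η)
    (hηxb : specBound (B xb) = η)
    -- a positive left eigenvector of B(x̄) for the eigenvalue η
    (ψ : Fin n → ℝ) (hψpos : ∀ i, 0 < ψ i)
    (hψ : ∀ k, ∑ i, ψ i * B xb i k = η * ψ k)
    -- the principal eigenpair of ℬ
    (sB : ℝ) (φ : Fin n → (Fin N → ℝ) → ℝ)
    (hφ : ∀ i, ContinuousOn (φ i) (closure Ω) ∧ ∀ x ∈ closure Ω, 0 < φ i x)
    (heig : ∀ i, ∀ x ∈ closure Ω,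
      (d i * ∫ y in Ω, J i x y * φ i y) + ∑ k, B x i k * φ k x = sB * φ i x)
    -- some nonlocal term is strictly positive at x̄
    (hpos : ∃ i, 0 < d i * ∫ y in Ω, J i xb y * φ i y) :
    η < sB := by
  set T : Fin n → ℝ := fun i => d i * ∫ y in Ω, J i xb y * φ i y with hT
  have hTnn : ∀ i, 0 ≤ T i := fun i =>
    mul_nonneg (hd i).le <| setIntegral_nonneg hΩo.measurableSet fun y hy =>
      mul_nonneg (hJnn i xb y) ((hφ i).2 y (subset_closure hy)).le
  set S : ℝ := ∑ i, ψ i * φ i xb with hS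
  have hSpos : 0 < S := by
    refine Finset.sum_pos (fun i _ => mul_pos (hψpos i) ((hφ i).2 xb hxb)) ⟨⟨0, hn⟩, Finset.mem_univ _⟩
  have hTsum : 0 < ∑ i, ψ i * T i := by
    obtain ⟨i, hi⟩ := hpos
    refine Finset.sum_pos' (fun j _ => mul_nonneg (hψpos j).le (hTnn j)) ⟨i, Finset.mem_univ i, mul_pos (hψpos i) hi⟩
  have hkey : (∑ i, ψ i * T i) + η * S = sB * S := by
    have h1 : ∑ i, ψ i * (T i + ∑ k, B xb i k * φ k xb) = ∑ i, ψ i * (sB * φ i xb) := by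
      refine Finset.sum_congr rfl fun i _ => by rw [heig i xb hxb]
    have h2 : ∑ i, ψ i * (∑ k, B xb i k * φ k xb) = η * S := by
      calc ∑ i, ψ i * (∑ k, B xb i k * φ k xb)
          = ∑ k, (∑ i, ψ i * B xb i k) * φ k xb := by
            simp only [Finset.mul_sum, Finset.sum_mul]
            rw [Finset.sum_comm]
            exact Finset.sum_congr rfl fun k _ => Finset.sum_congr rfl fun i _ => by ring
        _ = ∑ k, (η * ψ k) * φ k xb := by
            refine Finset.sum_congr rfl fun k _ => by rw [hψ k]
        _ = η * S := by rw [hS, Finset.mul_sum]; exact Finset.sum_congr rfl fun k _ => by ring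
    calc (∑ i, ψ i * T i) + η * S
        = ∑ i, ψ i * (T i + ∑ k, B xb i k * φ k xb) := by
          rw [← h2, ← Finset.sum_add_distrib]; exact Finset.sum_congr rfl fun i _ => by ring
      _ = sB * S := by rw [h1, hS, Finset.mul_sum]; exact Finset.sum_congr rfl fun i _ => by ring
  have : η * S < sB * S := by linarith
  exact lt_of_mul_lt_mul_right (by simpa [mul_comm] using this) hSpos.le
end
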